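/- For the 2D IIOE semi-implicit scheme with κ^x = sign(V), κ^y = sign(W), the amplification factor S(θ,φ) = (1 - (C/2)(e^{iθ}-1) - (D/2)(e^{iφ}-1)) / (1 + (C/2)(1-e^{-iθ}) + (D/2)(1-e^{-iφ})) satisfies |S(θ,φ)| = 1 for all θ, φ ∈ ℝ and all Courant numbers C, D ≥ 0. -/

import Mathlib

open Complex ComplexConjugate

/-
The denominator of the amplification factor is the complex conjugate of its numerator, so the
factor is `z / conj z`, of modulus one as soon as `z ≠ 0`. For `C, D ≥ 0` the numerator has real
part `1 + (C/2)(1 - cos θ) + (D/2)(1 - cos φ) ≥ 1`, so it does not vanish.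
-/

lemma norm_div_conj_self {z : ℂ} (hz : z ≠ 0) : ‖z / conj z‖ = 1 := by
  rw [norm_div, norm_conj, div_self (norm_ne_zero_iff.mpr hz)]

lemma conj_exp_ofReal_mul_I (θ : ℝ) : conj (exp (θ * I)) = exp (-θ * I) := by
  rw [← exp_conj, map_mul, conj_ofReal, conj_I, neg_mul, mul_neg]

lemma re_exp_ofReal_mul_I_sub_one_nonpos (θ : ℝ) : (exp (θ * I) - 1).re ≤ 0 := by
  simpa [exp_ofReal_mul_I_re] using Real.cos_le_one θ

lemma re_ofReal_div_two_mul (c : ℝ) (w : ℂ) : ((c : ℂ) / 2 * w).re = c / 2 * w.re := by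
  rw [← ofReal_ofNat, ← ofReal_div, re_ofReal_mul]

lemma one_le_re_one_sub_mul_exp_sub_one {C D : ℝ} (hC : 0 ≤ C) (hD : 0 ≤ D) (θ φ : ℝ) :
    1 ≤ (1 - (C : ℂ) / 2 * (exp (θ * I) - 1) - (D : ℂ) / 2 * (exp (φ * I) - 1)).re := by
  have hθ := mul_nonpos_of_nonneg_of_nonpos (by positivity : 0 ≤ C / 2)
    (re_exp_ofReal_mul_I_sub_one_nonpos θ)
  have hφ := mul_nonpos_of_nonneg_of_nonpos (by positivity : 0 ≤ D / 2)
    (re_exp_ofReal_mul_I_sub_one_nonpos φ)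
  rw [sub_re, sub_re, one_re, re_ofReal_div_two_mul, re_ofReal_div_two_mul]
  linarith

/-- The amplification factor of the 2D IIOE semi-implicit scheme has modulus 1
for all `θ, φ` and all Courant numbers `C, D ≥ 0`. -/
theorem iioe_2d_amplification_modulus_one (C D : ℝ) (hC : 0 ≤ C) (hD : 0 ≤ D) (θ φ : ℝ) :
    ‖(1 - (C : ℂ) / 2 * (Complex.exp ((θ : ℂ) * Complex.I) - 1)
        - (D : ℂ) / 2 * (Complex.exp ((φ : ℂ) * Complex.I) - 1)) /
      (1 + (C : ℂ) / 2 * (1 - Complex.exp (-(θ : ℂ) * Complex.I))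
        + (D : ℂ) / 2 * (1 - Complex.exp (-(φ : ℂ) * Complex.I)))‖ = 1 := by
  set z : ℂ := 1 - (C : ℂ) / 2 * (exp (θ * I) - 1) - (D : ℂ) / 2 * (exp (φ * I) - 1)
  have hden : 1 + (C : ℂ) / 2 * (1 - exp (-θ * I)) + (D : ℂ) / 2 * (1 - exp (-φ * I))
      = conj z := by
    simp only [z, map_sub, map_mul, map_div₀, map_one, map_ofNat, conj_ofReal,
      conj_exp_ofReal_mul_I]
    ring
  have hre : 1 ≤ z.re := one_le_re_one_sub_mul_exp_sub_one hC hD θ φ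
  have hz : z ≠ 0 := ne_zero_of_re_pos (one_pos.trans_le hre)
  rw [hden]
  exact norm_div_conj_self hz
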